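/- arXiv:1703.06479 — 2 statements merged into one kernel-verified Lean document; each statement's English description precedes it below -/
import Mathlib

section
/- With R, A, δ, φ and P_n as above (ghost components of the universal map A → W(A)), for all n ≥ 1 one has the explicit expansion P_n(x) = Σ_{i=0}^{n−1} Σ_{j=1}^{q^{n−1−i}} π^{i+j−n} · C(q^{n−1−i}, j) · P_i(x)^{q(q^{n−1−i}−j)} · (δ P_i(x))^j, where C(·,·) denotes the binomial coefficient. -/
/-!
Applying `φ` to the ghost identity of level `m` gives `φ^[m+1] x`, which is also the ghost sum of
level `m + 1`. Since `φ` fixes `π` and `φ y = y^q + π δ y`, each term `φ (π^i P_i^{q^{m-i}})`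
expands binomially into `π^i P_i^{q^{m+1-i}}`, which is the `i`-th term of the level `m + 1` ghost
sum, plus the `j ≥ 1` terms of the claimed formula. Cancelling the common terms leaves only
`π^{m+1} P_{m+1}` on the left.
-/

open Finset

theorem add_pow_eq_pow_add_sum_Icc {A : Type*} [CommSemiring A] (b e : A) (N : ℕ) :
    (b + e) ^ N = b ^ N + ∑ j ∈ Icc 1 N, e ^ j * b ^ (N - j) * (N.choose j : A) := by
  rw [add_comm, add_pow, sum_range_succ', ← Ico_add_one_right_eq_Icc, sum_Ico_eq_sum_range]
  simp [add_comm]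

theorem map_mul_pow_of_map_eq_pow_add_mul {A : Type*} [CommSemiring A] (φ : A →+* A)
    {q : ℕ} {c y d : A} (hc : φ c = c) (hy : φ y = y ^ q + c * d) (i k : ℕ) :
    φ (c ^ i * y ^ q ^ k) = c ^ i * y ^ q ^ (k + 1) +
      ∑ j ∈ Icc 1 (q ^ k), c ^ (i + j) * ((q ^ k).choose j : A) * y ^ (q * (q ^ k - j)) * d ^ j := by
  rw [map_mul, map_pow, map_pow, hc, hy, add_pow_eq_pow_add_sum_Icc, mul_add, mul_sum,
    ← pow_mul, pow_succ']
  congr 1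
  refine sum_congr rfl fun j _ => ?_
  rw [pow_mul]
  ring

theorem stmt_6_general {R A : Type*} [CommRing R]
    [CommRing A] [Algebra R A]
    (π : R)
    (q : ℕ)
    (δ : A → A) (φ : A →+* A)
    (hφδ : ∀ x : A, φ x = x ^ q + algebraMap R A π * δ x)
    (hφR : ∀ r : R, φ (algebraMap R A r) = algebraMap R A r)
    (P : ℕ → A → A)
    (hghost : ∀ (n : ℕ) (x : A),
      ∑ i ∈ Finset.range (n + 1), algebraMap R A π ^ i * (P i x) ^ (q ^ (n - i)) = (⇑φ)^[n] x)
    (n : ℕ) (hn : 1 ≤ n) (x : A) :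
    algebraMap R A π ^ n * P n x =
      ∑ i ∈ Finset.range n, ∑ j ∈ Finset.Icc 1 (q ^ (n - 1 - i)),
        algebraMap R A π ^ (i + j) * ((q ^ (n - 1 - i)).choose j : A) *
          (P i x) ^ (q * (q ^ (n - 1 - i) - j)) * (δ (P i x)) ^ j := by
  obtain ⟨m, rfl⟩ : ∃ m, n = m + 1 := ⟨n - 1, by omega⟩
  have hstep := hghost (m + 1) x
  rw [Function.iterate_succ_apply', ← hghost m x, map_sum, sum_range_succ,
    Nat.sub_self, pow_zero, pow_one] at hstep
  have hexpand : ∀ i ∈ range (m + 1), φ (algebraMap R A π ^ i * P i x ^ q ^ (m - i)) =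
      algebraMap R A π ^ i * P i x ^ q ^ (m + 1 - i) +
      ∑ j ∈ Icc 1 (q ^ (m + 1 - 1 - i)), algebraMap R A π ^ (i + j) *
        ((q ^ (m + 1 - 1 - i)).choose j : A) * P i x ^ (q * (q ^ (m + 1 - 1 - i) - j)) *
          δ (P i x) ^ j := fun i hi => by
    rw [Nat.add_sub_cancel, Nat.sub_add_comm (mem_range_succ_iff.mp hi)]
    exact map_mul_pow_of_map_eq_pow_add_mul φ (hφR π) (hφδ _) i (m - i)
  rw [sum_congr rfl hexpand, sum_add_distrib] at hstep
  exact add_left_cancel hstep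

/-- The explicit expansion of `P_n(x)` (multiplied through by `π^n`
to clear the negative powers `π^{i+j-n}`):
`π^n P_n(x) = Σ_{i=0}^{n-1} Σ_{j=1}^{q^{n-1-i}} π^{i+j} C(q^{n-1-i}, j)
  P_i(x)^{q(q^{n-1-i}-j)} (δ P_i(x))^j`. -/
theorem stmt_6 {R A : Type*} [CommRing R] [IsDomain R] [IsDiscreteValuationRing R]
    [CommRing A] [Algebra R A]
    (π : R) (hπ : Irreducible π)
    (hcomp : IsAdicComplete (Ideal.span {π} : Ideal R) R)
    (q : ℕ) (hq : Nat.card (R ⧸ (Ideal.span {π} : Ideal R)) = q)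
    (htf : ∀ a : A, algebraMap R A π * a = 0 → a = 0)
    (δ : A → A) (φ : A →+* A)
    (hφδ : ∀ x : A, φ x = x ^ q + algebraMap R A π * δ x)
    (hφR : ∀ r : R, φ (algebraMap R A r) = algebraMap R A r)
    (P : ℕ → A → A) (hP0 : ∀ x : A, P 0 x = x)
    (hghost : ∀ (n : ℕ) (x : A),
      ∑ i ∈ Finset.range (n + 1), algebraMap R A π ^ i * (P i x) ^ (q ^ (n - i)) = (⇑φ)^[n] x)
    (n : ℕ) (hn : 1 ≤ n) (x : A) :
    algebraMap R A π ^ n * P n x =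
      ∑ i ∈ Finset.range n, ∑ j ∈ Finset.Icc 1 (q ^ (n - 1 - i)),
        algebraMap R A π ^ (i + j) * ((q ^ (n - 1 - i)).choose j : A) *
          (P i x) ^ (q * (q ^ (n - 1 - i) - j)) * (δ (P i x)) ^ j :=
  stmt_6_general π q δ φ hφδ hφR P hghost n hn x
end

section
/- Let R be an equal-characteristic complete DVR, A a π-torsion-free, separated, π-adically complete R-algebra with Frobenius lift φ inducing an isomorphism on A₀ = A/πA, and suppose the base B is a k-algebra so that R ≅ k[[π]]. Then for every n ≥ 0 there is an isomorphism A/π^{n+1}A ≅ A^δ ⊗_k (R/π^{n+1}R), compatible with reduction maps. -/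
/-!
The elements `a` with `φ a = a ^ q`, i.e. `A^δ`, are Teichmüller representatives for `A/π`:
every residue class contains exactly one of them. For existence, pick successive `q`-th roots
`z n` of `x` modulo `π` (Frobenius is onto mod `π`). In characteristic `p`, raising a congruence
mod `π` to the power `q ^ n` makes it a congruence mod `π ^ (n + 1)`, so `z n ^ q ^ n` converges,
and since `φ y ≡ y ^ q` mod `π` the limit satisfies `φ a = a ^ q`. For uniqueness, if such an `a`
is divisible by `π ^ n`, then `φ a = a ^ q` is divisible by `π ^ (n + 1)`, hence so is `a`, as `φ`
is injective mod `π`. Expanding `x = a₀ + π a₁ + π² a₂ + ⋯` with representatives `aᵢ` then shows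
that `X ↦ π` induces `A^δ[X]/(X^{n+1}) ≃ A/π^{n+1}`.
-/

section Adic

variable {A : Type*} [CommRing A] {ϖ : A}

theorem smodEq_span_singleton_pow_iff {n : ℕ} {x y : A} :
    x ≡ y [SMOD ((Ideal.span {ϖ}) ^ n • ⊤ : Submodule A A)] ↔ ϖ ^ n ∣ x - y := by
  rw [SModEq.sub_mem, smul_eq_mul, Ideal.mul_top, Ideal.span_singleton_pow,
    Ideal.mem_span_singleton]

theorem eq_zero_of_forall_pow_succ_dvd [IsHausdorff (Ideal.span {ϖ}) A] {x : A}
    (h : ∀ n, ϖ ^ (n + 1) ∣ x) : x = 0 := by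
  refine IsHausdorff.haus' (I := Ideal.span {ϖ}) x fun n => ?_
  rw [smodEq_span_singleton_pow_iff, sub_zero]
  exact (pow_dvd_pow ϖ n.le_succ).trans (h n)

theorem exists_forall_pow_succ_dvd_sub [IsPrecomplete (Ideal.span {ϖ}) A] {a : ℕ → A}
    (ha : ∀ n, ϖ ^ (n + 1) ∣ a (n + 1) - a n) : ∃ L, ∀ n, ϖ ^ (n + 1) ∣ a n - L := by
  have hcauchy : AdicCompletion.IsAdicCauchy (Ideal.span {ϖ}) A a := by
    refine (AdicCompletion.isAdicCauchy_iff _ _ a).mpr fun n => ?_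
    rw [smodEq_span_singleton_pow_iff, dvd_sub_comm]
    exact (pow_dvd_pow ϖ n.le_succ).trans (ha n)
  obtain ⟨L, hL⟩ := IsPrecomplete.prec' a hcauchy
  refine ⟨L, fun n => ?_⟩
  have hL' := smodEq_span_singleton_pow_iff.mp (hL (n + 1))
  rw [← sub_add_sub_cancel (a n) (a (n + 1)) L]
  exact dvd_add (dvd_sub_comm.mp (ha n)) hL'

end Adic

section Frobenius

variable {A : Type*} [CommRing A] {q : ℕ}

theorem sub_pow_prime_pow_of_natCast_eq_zero {p : ℕ} (hp : p.Prime) (hpA : (p : A) = 0)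
    (h : ℕ) (x y : A) : (x - y) ^ p ^ h = x ^ p ^ h - y ^ p ^ h := by
  nontriviality A
  have : CharP A p := (CharP.charP_iff_prime_eq_zero hp).mpr hpA
  have : Fact p.Prime := ⟨hp⟩
  exact sub_pow_char_pow x y h

theorem sub_pow_pow_of_sub_pow (hfrob : ∀ x y : A, (x - y) ^ q = x ^ q - y ^ q) (n : ℕ)
    (x y : A) : (x - y) ^ q ^ n = x ^ q ^ n - y ^ q ^ n := by
  induction n with
  | zero => simp
  | succ n ih => rw [pow_succ, pow_mul, pow_mul, pow_mul, ih, hfrob]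

theorem pow_succ_dvd_pow_pow_sub_pow_pow (hq : 2 ≤ q)
    (hfrob : ∀ x y : A, (x - y) ^ q = x ^ q - y ^ q) {ϖ u v : A} (h : ϖ ∣ u - v) (n : ℕ) :
    ϖ ^ (n + 1) ∣ u ^ q ^ n - v ^ q ^ n := by
  have hn : n + 1 ≤ q ^ n :=
    (Nat.lt_two_pow_self).trans_le (Nat.pow_le_pow_left hq n)
  rw [← sub_pow_pow_of_sub_pow hfrob]
  exact (pow_dvd_pow ϖ hn).trans (pow_dvd_pow_of_dvd h _)

end Frobenius

section FrobeniusLift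

variable {A : Type*} [CommRing A] {ϖ : A} {φ : A →+* A} {q : ℕ}

theorem pow_dvd_of_pow_dvd_map (hϖ : IsLeftRegular ϖ) (hφϖ : φ ϖ = ϖ)
    (hφinj : ∀ x, ϖ ∣ φ x → ϖ ∣ x) (n : ℕ) {x : A} (h : ϖ ^ n ∣ φ x) : ϖ ^ n ∣ x := by
  induction n generalizing x with
  | zero => simp
  | succ n ih =>
    obtain ⟨y, rfl⟩ := hφinj x ((dvd_pow_self ϖ n.succ_ne_zero).trans h)
    rw [map_mul, hφϖ, pow_succ', hϖ.dvd_cancel_left] at h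
    rw [pow_succ', hϖ.dvd_cancel_left]
    exact ih h

theorem eq_zero_of_map_eq_pow_of_dvd [IsHausdorff (Ideal.span {ϖ}) A] (hϖ : IsLeftRegular ϖ)
    (hφϖ : φ ϖ = ϖ) (hφinj : ∀ x, ϖ ∣ φ x → ϖ ∣ x) (hq : 2 ≤ q) {a : A} (ha : φ a = a ^ q)
    (hdvd : ϖ ∣ a) : a = 0 := by
  refine eq_zero_of_forall_pow_succ_dvd (ϖ := ϖ) fun n => ?_
  induction n with
  | zero => simpa using hdvd
  | succ n ih =>
    refine pow_dvd_of_pow_dvd_map hϖ hφϖ hφinj _ ?_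
    have hpow : ϖ ^ ((n + 1) * q) ∣ a ^ q := pow_mul ϖ (n + 1) q ▸ pow_dvd_pow_of_dvd ih q
    rw [ha]
    exact (pow_dvd_pow ϖ (by nlinarith)).trans hpow

theorem exists_seq_dvd_pow_sub (hsurj : ∀ y : A, ∃ x, ϖ ∣ x ^ q - y) (x : A) :
    ∃ z : ℕ → A, z 0 = x ∧ ∀ n, ϖ ∣ z (n + 1) ^ q - z n := by
  choose root hroot using hsurj
  refine ⟨fun n => root^[n] x, rfl, fun n => ?_⟩
  show ϖ ∣ root^[n + 1] x ^ q - root^[n] x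
  rw [Function.iterate_succ_apply']
  exact hroot _

theorem map_eq_pow_of_pow_succ_dvd_sub [IsHausdorff (Ideal.span {ϖ}) A] (hq : 2 ≤ q)
    (hfrob : ∀ x y : A, (x - y) ^ q = x ^ q - y ^ q) (hφϖ : φ ϖ = ϖ)
    (hφ : ∀ x, ϖ ∣ φ x - x ^ q) {z : ℕ → A} {L : A}
    (hL : ∀ n, ϖ ^ (n + 1) ∣ z n ^ q ^ n - L) : φ L = L ^ q := by
  refine sub_eq_zero.mp (eq_zero_of_forall_pow_succ_dvd (ϖ := ϖ) fun n => ?_)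
  set a := z n ^ q ^ n
  have hφL : ϖ ^ (n + 1) ∣ φ L - φ a := by
    have := map_dvd φ (dvd_sub_comm.mp (hL n))
    rwa [map_sub, map_pow φ ϖ, hφϖ] at this
  have hφa : ϖ ^ (n + 1) ∣ φ a - a ^ q := by
    rw [map_pow, pow_right_comm]
    exact pow_succ_dvd_pow_pow_sub_pow_pow hq hfrob (hφ (z n)) n
  have haL : ϖ ^ (n + 1) ∣ a ^ q - L ^ q := by
    rw [← hfrob]
    exact dvd_pow (hL n) (by omega)
  rw [← sub_add_sub_cancel _ (φ a), ← sub_add_sub_cancel (φ a) (a ^ q)]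
  exact dvd_add hφL (dvd_add hφa haL)

theorem exists_map_eq_pow_dvd_sub [IsAdicComplete (Ideal.span {ϖ}) A] (hq : 2 ≤ q)
    (hfrob : ∀ x y : A, (x - y) ^ q = x ^ q - y ^ q) (hφϖ : φ ϖ = ϖ)
    (hφ : ∀ x, ϖ ∣ φ x - x ^ q) (hsurj : ∀ y : A, ∃ x, ϖ ∣ x ^ q - y) (x : A) :
    ∃ a, φ a = a ^ q ∧ ϖ ∣ x - a := by
  obtain ⟨z, hz0, hz⟩ := exists_seq_dvd_pow_sub hsurj x
  have hstep : ∀ n, ϖ ^ (n + 1) ∣ z (n + 1) ^ q ^ (n + 1) - z n ^ q ^ n := fun n => by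
    rw [pow_succ' q n, pow_mul]
    exact pow_succ_dvd_pow_pow_sub_pow_pow hq hfrob (hz n) n
  obtain ⟨L, hL⟩ := exists_forall_pow_succ_dvd_sub (a := fun n => z n ^ q ^ n) hstep
  refine ⟨L, map_eq_pow_of_pow_succ_dvd_sub hq hfrob hφϖ hφ hL, ?_⟩
  simpa [hz0] using hL 0

end FrobeniusLift

section Representatives

open Polynomial

variable {A : Type*} [CommRing A] {T : Subring A} {ϖ : A}

theorem pow_dvd_aeval_iff (hϖ : IsLeftRegular ϖ) (hrep_zero : ∀ a ∈ T, ϖ ∣ a → a = 0)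
    (n : ℕ) (f : T[X]) : ϖ ^ n ∣ aeval ϖ f ↔ X ^ n ∣ f := by
  refine ⟨fun h => ?_, fun h => by simpa using map_dvd (aeval ϖ) h⟩
  induction n generalizing f with
  | zero => exact one_dvd f
  | succ n ih =>
    have hf := divX_mul_X_add f
    have hcoeff : ϖ ∣ (f.coeff 0 : A) := by
      rw [← hf, map_add, map_mul, aeval_X, aeval_C] at h
      exact (dvd_add_right (dvd_mul_left ϖ _)).mp ((dvd_pow_self ϖ n.succ_ne_zero).trans h)
    have hcoeff0 : f.coeff 0 = 0 := Subtype.ext (hrep_zero _ (f.coeff 0).2 hcoeff)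
    rw [hcoeff0, map_zero, add_zero] at hf
    rw [← hf, map_mul, aeval_X, pow_succ', mul_comm _ ϖ, hϖ.dvd_cancel_left] at h
    rw [← hf, pow_succ]
    exact mul_dvd_mul_right (ih _ h) X

theorem exists_pow_dvd_sub_aeval (hrep : ∀ x, ∃ a ∈ T, ϖ ∣ x - a) (n : ℕ) (x : A) :
    ∃ f : T[X], ϖ ^ n ∣ x - aeval ϖ f := by
  induction n generalizing x with
  | zero => exact ⟨0, by simp⟩
  | succ n ih =>
    obtain ⟨a, ha, y, hy⟩ := hrep x
    obtain ⟨f, hf⟩ := ih y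
    refine ⟨C ⟨a, ha⟩ + X * f, ?_⟩
    have : x - aeval ϖ (C ⟨a, ha⟩ + X * f) = ϖ * (y - aeval ϖ f) := by
      simp only [map_add, map_mul, aeval_X, aeval_C]
      change x - (a + ϖ * aeval ϖ f) = _
      rw [mul_sub, ← hy]
      ring
    rw [this, pow_succ']
    exact mul_dvd_mul_left ϖ hf

theorem ker_mk_comp_aeval (hϖ : IsLeftRegular ϖ) (hrep_zero : ∀ a ∈ T, ϖ ∣ a → a = 0) (n : ℕ) :
    RingHom.ker ((Ideal.Quotient.mk (Ideal.span {ϖ ^ n})).comp (aeval ϖ : T[X] →ₐ[T] A).toRingHom) =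
      Ideal.span {X ^ n} := by
  ext f
  rw [RingHom.mem_ker, RingHom.comp_apply, Ideal.Quotient.eq_zero_iff_mem,
    Ideal.mem_span_singleton, Ideal.mem_span_singleton]
  exact pow_dvd_aeval_iff hϖ hrep_zero n f

theorem mk_comp_aeval_surjective (hrep : ∀ x, ∃ a ∈ T, ϖ ∣ x - a) (n : ℕ) :
    Function.Surjective
      ((Ideal.Quotient.mk (Ideal.span {ϖ ^ n})).comp (aeval ϖ : T[X] →ₐ[T] A).toRingHom) := by
  intro y
  obtain ⟨x, rfl⟩ := Ideal.Quotient.mk_surjective y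
  obtain ⟨f, hf⟩ := exists_pow_dvd_sub_aeval hrep n x
  refine ⟨f, (Ideal.Quotient.mk_eq_mk_iff_sub_mem _ _).mpr ?_⟩
  exact Ideal.mem_span_singleton.mpr (dvd_sub_comm.mp hf)

noncomputable def quotientSpanPowEquiv (hϖ : IsLeftRegular ϖ) (hrep : ∀ x, ∃ a ∈ T, ϖ ∣ x - a)
    (hrep_zero : ∀ a ∈ T, ϖ ∣ a → a = 0) (n : ℕ) :
    T[X] ⧸ Ideal.span {(X : T[X]) ^ n} ≃+* A ⧸ Ideal.span {ϖ ^ n} :=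
  (Ideal.quotEquivOfEq (ker_mk_comp_aeval hϖ hrep_zero n).symm).trans
    (RingHom.quotientKerEquivOfSurjective (mk_comp_aeval_surjective hrep n))

theorem quotientSpanPowEquiv_mk (hϖ : IsLeftRegular ϖ) (hrep : ∀ x, ∃ a ∈ T, ϖ ∣ x - a)
    (hrep_zero : ∀ a ∈ T, ϖ ∣ a → a = 0) (n : ℕ) (f : T[X]) :
    quotientSpanPowEquiv hϖ hrep hrep_zero n (Ideal.Quotient.mk _ f) =
      Ideal.Quotient.mk _ (aeval ϖ f) :=
  rfl

theorem factor_quotientSpanPowEquiv_symm_mk (hϖ : IsLeftRegular ϖ)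
    (hrep : ∀ x, ∃ a ∈ T, ϖ ∣ x - a) (hrep_zero : ∀ a ∈ T, ϖ ∣ a → a = 0) {m k : ℕ} (hmk : m ≤ k)
    (x : A) :
    Ideal.Quotient.factor (Ideal.span_singleton_le_span_singleton.mpr (pow_dvd_pow (X : T[X]) hmk))
        ((quotientSpanPowEquiv hϖ hrep hrep_zero k).symm (Ideal.Quotient.mk _ x)) =
      (quotientSpanPowEquiv hϖ hrep hrep_zero m).symm (Ideal.Quotient.mk _ x) := by
  obtain ⟨f, hf⟩ := Ideal.Quotient.mk_surjective
    ((quotientSpanPowEquiv hϖ hrep hrep_zero k).symm (Ideal.Quotient.mk _ x))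
  have hfk := congrArg (quotientSpanPowEquiv hϖ hrep hrep_zero k) hf
  rw [RingEquiv.apply_symm_apply, quotientSpanPowEquiv_mk, Ideal.Quotient.mk_eq_mk_iff_sub_mem,
    Ideal.mem_span_singleton] at hfk
  rw [← hf, Ideal.Quotient.factor_mk, RingEquiv.eq_symm_apply, quotientSpanPowEquiv_mk,
    Ideal.Quotient.mk_eq_mk_iff_sub_mem, Ideal.mem_span_singleton]
  exact (pow_dvd_pow ϖ hmk).trans hfk

end Representatives

theorem stmt_18_general {R A : Type*} [CommRing R]
    [CommRing A] [Algebra R A]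
    (p : ℕ) (hp : p.Prime) [CharP R p]
    (π : R)
    (q h : ℕ) (hqp : q = p ^ h)
    (hh : 1 ≤ h)
    (htf : ∀ a : A, algebraMap R A π * a = 0 → a = 0)
    (hcompA : IsAdicComplete (Ideal.span {algebraMap R A π} : Ideal A) A)
    (δ : A → A) (φ : A →+* A)
    (hφδ : ∀ x : A, φ x = x ^ q + algebraMap R A π * δ x)
    (hφR : ∀ r : R, φ (algebraMap R A r) = algebraMap R A r)
    (hφsurj : ∀ y : A, ∃ x : A, algebraMap R A π ∣ (y - φ x))
    (hφinj : ∀ x : A, algebraMap R A π ∣ φ x → algebraMap R A π ∣ x)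
    (Aδ : Subring A) (hAδ : ∀ x : A, x ∈ Aδ ↔ δ x = 0) :
    ∃ e : (n : ℕ) → (A ⧸ (Ideal.span {algebraMap R A π ^ (n + 1)} : Ideal A)) ≃+*
        (Polynomial Aδ ⧸ (Ideal.span {(Polynomial.X : Polynomial Aδ) ^ (n + 1)})),
      ∀ (n : ℕ) (x : A),
        Ideal.Quotient.factor
            (Ideal.span_singleton_le_span_singleton.mpr
              (pow_dvd_pow (Polynomial.X : Polynomial Aδ) (Nat.le_succ (n + 1))))
            (e (n + 1) (Ideal.Quotient.mk _ x)) =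
          e n (Ideal.Quotient.mk _ x) := by
  set ϖ := algebraMap R A π
  have hq2 : 2 ≤ q := hqp ▸ hp.two_le.trans (Nat.le_self_pow (by omega) p)
  have hpA : (p : A) = 0 := by
    rw [← map_natCast (algebraMap R A), CharP.cast_eq_zero, map_zero]
  have hfrob : ∀ x y : A, (x - y) ^ q = x ^ q - y ^ q :=
    hqp ▸ sub_pow_prime_pow_of_natCast_eq_zero hp hpA h
  have hϖ : IsLeftRegular ϖ := isLeftRegular_iff_right_eq_zero_of_mul.mpr htf
  have hφϖ : φ ϖ = ϖ := hφR π
  have hφ : ∀ x, ϖ ∣ φ x - x ^ q := fun x => ⟨δ x, by rw [hφδ]; ring⟩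
  have hmem : ∀ a, a ∈ Aδ ↔ φ a = a ^ q := fun a => by
    rw [hAδ, hφδ, add_eq_left, hϖ.mul_left_eq_zero_iff]
  have hsurj : ∀ y : A, ∃ x, ϖ ∣ x ^ q - y := fun y => (hφsurj y).imp fun x hx =>
    dvd_sub_comm.mp (sub_add_sub_cancel y (φ x) (x ^ q) ▸ dvd_add hx (hφ x))
  have hrep : ∀ x, ∃ a ∈ Aδ, ϖ ∣ x - a := fun x =>
    (exists_map_eq_pow_dvd_sub hq2 hfrob hφϖ hφ hsurj x).imp fun a ha =>
      ⟨(hmem a).mpr ha.1, ha.2⟩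
  have hrep_zero : ∀ a ∈ Aδ, ϖ ∣ a → a = 0 := fun a ha =>
    eq_zero_of_map_eq_pow_of_dvd hϖ hφϖ hφinj hq2 ((hmem a).mp ha)
  exact ⟨fun n => (quotientSpanPowEquiv hϖ hrep hrep_zero (n + 1)).symm,
    fun n x => factor_quotientSpanPowEquiv_symm_mk hϖ hrep hrep_zero (n + 1).le_succ x⟩

/-- In the setting of Theorem `iso` (equal characteristic,
`R ≅ k[[π]]`): for every `n ≥ 0` there is an isomorphism
`A/π^{n+1}A ≅ A^δ ⊗_k R/π^{n+1}R ≅ A^δ[π]/(π^{n+1})` (rendered here as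
`(A^δ)[X]/(X^{n+1})`), compatibly with the reduction maps. -/
theorem stmt_18 {R A : Type*} [CommRing R] [IsDomain R] [IsDiscreteValuationRing R]
    [CommRing A] [Algebra R A]
    (p : ℕ) (hp : p.Prime) [CharP R p]
    (π : R) (hπ : Irreducible π)
    (hcomp : IsAdicComplete (Ideal.span {π} : Ideal R) R)
    (q h : ℕ) (hq : Nat.card (R ⧸ (Ideal.span {π} : Ideal R)) = q) (hqp : q = p ^ h)
    (hh : 1 ≤ h)
    (htf : ∀ a : A, algebraMap R A π * a = 0 → a = 0)
    (hcompA : IsAdicComplete (Ideal.span {algebraMap R A π} : Ideal A) A)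
    (δ : A → A) (φ : A →+* A)
    (hφδ : ∀ x : A, φ x = x ^ q + algebraMap R A π * δ x)
    (hφR : ∀ r : R, φ (algebraMap R A r) = algebraMap R A r)
    (hφsurj : ∀ y : A, ∃ x : A, algebraMap R A π ∣ (y - φ x))
    (hφinj : ∀ x : A, algebraMap R A π ∣ φ x → algebraMap R A π ∣ x)
    (Aδ : Subring A) (hAδ : ∀ x : A, x ∈ Aδ ↔ δ x = 0) :
    ∃ e : (n : ℕ) → (A ⧸ (Ideal.span {algebraMap R A π ^ (n + 1)} : Ideal A)) ≃+*
        (Polynomial Aδ ⧸ (Ideal.span {(Polynomial.X : Polynomial Aδ) ^ (n + 1)})),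
      ∀ (n : ℕ) (x : A),
        Ideal.Quotient.factor
            (Ideal.span_singleton_le_span_singleton.mpr
              (pow_dvd_pow (Polynomial.X : Polynomial Aδ) (Nat.le_succ (n + 1))))
            (e (n + 1) (Ideal.Quotient.mk _ x)) =
          e n (Ideal.Quotient.mk _ x) :=
  stmt_18_general p hp π q h hqp hh htf hcompA δ φ hφδ hφR hφsurj hφinj Aδ hAδ
end
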